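/- Let 0 < θ < π/2 and let q : 𝔻∖{0} → ℂ be the analytic function equal to the Schwarzian derivative of h_θ(z) = (1/2)(iz + 1/(iz)) − i cos(θ)·L(z) on every open subset of 𝔻∖{0} carrying a holomorphic branch L of log(iz). Define the Möbius transformation φ_θ(w) = (w − e^{iθ})/(w e^{iθ} − 1) (an involution with φ_θ(e^{iθ}) = 0 and φ_θ(0) = e^{iθ}). Then lim_{w→e^{iθ}} (w − e^{iθ})·q(φ_θ(w))·(φ_θ′(w))² = 2i·cot(θ)·e^{−iθ}, and this value equals one half of the Wirtinger derivative ∂_z = (∂_x − i∂_y)/2 of the function z ↦ −8 log(Im z/|z|) evaluated at z = e^{iθ}. -/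

import Mathlib

open Complex Filter

/-- The Schwarzian derivative `S[f] = f'''/f' − (3/2)(f''/f')²`. -/
noncomputable def schwarzian (f : ℂ → ℂ) (z : ℂ) : ℂ :=
  deriv (deriv (deriv f)) z / deriv f z - (3 / 2) * (deriv (deriv f) z / deriv f z) ^ 2

/-- The Wirtinger derivative `∂_z u = (∂_x u − i ∂_y u)/2` of a real-valued function. -/
noncomputable def wirtinger (u : ℂ → ℝ) (z : ℂ) : ℂ :=
  (1 / 2 : ℂ) * (((fderiv ℝ u z) 1 : ℝ) - Complex.I * ((fderiv ℝ u z) Complex.I : ℝ))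

/-!
Near every point of `𝔻 ∖ {0}` there is a holomorphic branch `L` of `log (i z)`, and `L' = 1/z`,
so `h_θ' = i (z² - 2 c z + 1) / (2 z²)` with `c = cos θ`, and the Schwarzian of `h_θ` is the
rational function `-2 (2 c z² - (3 + c²) z + 2 c) / (z (z² - 2 c z + 1)²)`. It has a simple pole
at `0` with residue `-4c`. Since `φ_θ(e^{iθ}) = 0` and `φ_θ'(w) = (e^{2iθ} - 1)/(w e^{iθ} - 1)²`,
the pulled-back quadratic differential `q(φ_θ w) φ_θ'(w)²` has residue
`-4c / (e^{2iθ} - 1) = 2i cot θ e^{-iθ}` at `e^{iθ}`.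

On the energy side, `-8 log (Im z / |z|) = -8 log (Im z) + 8 Re (log z)` near `e^{iθ}`, whose
`∂_z` is `4i / Im z + 4 / z`; at `z = e^{iθ}` half of it is again `2i cot θ e^{-iθ}`.
-/

open Metric Topology

theorem schwarzian_eq_of_hasDerivAt {f f₁ f₂ : ℂ → ℂ} {f₃ z : ℂ} {U : Set ℂ} (hU : IsOpen U)
    (hz : z ∈ U) (h₁ : ∀ w ∈ U, HasDerivAt f (f₁ w) w) (h₂ : ∀ w ∈ U, HasDerivAt f₁ (f₂ w) w)
    (h₃ : HasDerivAt f₂ f₃ z) :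
    schwarzian f z = f₃ / f₁ z - 3 / 2 * (f₂ z / f₁ z) ^ 2 := by
  have hd₁ : deriv f =ᶠ[𝓝 z] f₁ :=
    eventually_of_mem (hU.mem_nhds hz) fun w hw => (h₁ w hw).deriv
  have hd₂ : deriv (deriv f) =ᶠ[𝓝 z] f₂ :=
    hd₁.deriv.trans (eventually_of_mem (hU.mem_nhds hz) fun w hw => (h₂ w hw).deriv)
  rw [schwarzian, hd₂.deriv_eq, h₃.deriv, hd₁.self_of_nhds, hd₂.self_of_nhds]

theorem exists_hasDerivAt_log_branch {S : Set ℂ} (hS : IsOpen S) (h0 : (0 : ℂ) ∉ S) {z : ℂ}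
    (hz : z ∈ S) {c : ℂ} (hc : c ≠ 0) :
    ∃ U ⊆ S, IsOpen U ∧ z ∈ U ∧ ∃ L : ℂ → ℂ,
      ∀ y ∈ U, HasDerivAt L y⁻¹ y ∧ exp (L y) = c * y := by
  have hz0 : z ≠ 0 := fun h => h0 (h ▸ hz)
  refine ⟨S ∩ ball z ‖z‖, Set.inter_subset_left, hS.inter isOpen_ball,
    ⟨hz, mem_ball_self (norm_pos_iff.2 hz0)⟩, fun y => log (y / z) + log (c * z), ?_⟩
  rintro y ⟨hyS, hyz⟩
  have hy0 : y ≠ 0 := fun h => h0 (h ▸ hyS)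
  have hslit : y / z ∈ slitPlane := by
    have h : ‖y / z - 1‖ < 1 := by
      rwa [div_sub_one hz0, norm_div, div_lt_one (norm_pos_iff.2 hz0), ← dist_eq]
    simpa using mem_slitPlane_of_norm_lt_one h
  constructor
  · refine ((((hasDerivAt_id y).div_const z).clog hslit).add_const (log (c * z))).congr_deriv ?_
    simp only [id]
    field_simp
  · rw [exp_add, exp_log (div_ne_zero hy0 hz0), exp_log (mul_ne_zero hc hz0)]
    field_simp

section JoukowskySubLog

variable {c w : ℂ}

theorem hasDerivAt_joukowsky_sub_log {L : ℂ → ℂ} (hw : w ≠ 0) (hL : HasDerivAt L w⁻¹ w) :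
    HasDerivAt (fun w => (1 / 2 : ℂ) * (I * w + 1 / (I * w)) - I * c * L w)
      (I * (w ^ 2 - 2 * c * w + 1) / (2 * w ^ 2)) w := by
  have hIw : HasDerivAt (fun w => I * w) I w := by simpa using (hasDerivAt_id w).const_mul I
  simp only [one_div]
  refine (((hIw.fun_add (hIw.fun_inv (mul_ne_zero I_ne_zero hw))).const_mul (2⁻¹ : ℂ)).fun_sub
    (hL.const_mul (I * c))).congr_deriv ?_
  field_simp
  rw [I_sq]
  ring

theorem hasDerivAt_joukowsky_sub_log_deriv (hw : w ≠ 0) :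
    HasDerivAt (fun w => I * (w ^ 2 - 2 * c * w + 1) / (2 * w ^ 2)) (I * (c * w - 1) / w ^ 3) w := by
  have hnum : HasDerivAt (fun w => I * (w ^ 2 - 2 * c * w + 1)) (I * (2 * w - 2 * c)) w := by
    refine ((((hasDerivAt_pow 2 w).sub ((hasDerivAt_id w).const_mul (2 * c))).add_const 1).const_mul
        I).congr_deriv ?_
    simp
  have hden : HasDerivAt (fun w => 2 * w ^ 2) (4 * w) w := by
    refine ((hasDerivAt_pow 2 w).const_mul 2).congr_deriv ?_
    ring
  refine (hnum.div hden (by simpa using hw)).congr_deriv ?_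
  field_simp
  ring

theorem hasDerivAt_joukowsky_sub_log_deriv_deriv (hw : w ≠ 0) :
    HasDerivAt (fun w => I * (c * w - 1) / w ^ 3) (I * (3 - 2 * c * w) / w ^ 4) w := by
  have hnum : HasDerivAt (fun w => I * (c * w - 1)) (I * c) w := by
    simpa using (((hasDerivAt_id w).const_mul c).sub_const 1).const_mul I
  refine (hnum.div (hasDerivAt_pow 3 w) (by simpa using hw)).congr_deriv ?_
  field_simp
  ring

theorem schwarzian_joukowsky_sub_log {L : ℂ → ℂ} {U : Set ℂ} (hU : IsOpen U) (h0 : (0 : ℂ) ∉ U)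
    (hL : ∀ w ∈ U, HasDerivAt L w⁻¹ w) {z : ℂ} (hz : z ∈ U) :
    schwarzian (fun w => (1 / 2 : ℂ) * (I * w + 1 / (I * w)) - I * c * L w) z
      = -2 * (2 * c * z ^ 2 - (3 + c ^ 2) * z + 2 * c) / (z * (z ^ 2 - 2 * c * z + 1) ^ 2) := by
  have hU0 : ∀ w ∈ U, w ≠ 0 := fun w hw h => h0 (h ▸ hw)
  rw [schwarzian_eq_of_hasDerivAt hU hz
    (fun w hw => hasDerivAt_joukowsky_sub_log (hU0 w hw) (hL w hw))
    (fun w hw => hasDerivAt_joukowsky_sub_log_deriv (hU0 w hw))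
    (hasDerivAt_joukowsky_sub_log_deriv_deriv (hU0 z hz))]
  have hz0 := hU0 z hz
  field_simp
  ring

end JoukowskySubLog

theorem tendsto_mul_nhdsNE_zero_of_eq_schwarzian {c : ℂ} {q : ℂ → ℂ}
    (hqS : ∀ U : Set ℂ, IsOpen U → U ⊆ ball (0 : ℂ) 1 \ {0} →
      ∀ L : ℂ → ℂ, DifferentiableOn ℂ L U → (∀ z ∈ U, exp (L z) = I * z) →
        ∀ z ∈ U, q z = schwarzian (fun w => (1 / 2 : ℂ) * (I * w + 1 / (I * w)) - I * c * L w) z) :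
    Tendsto (fun z => z * q z) (𝓝[≠] 0) (𝓝 (-4 * c)) := by
  have hq : ∀ z ∈ ball (0 : ℂ) 1 \ {0},
      q z = -2 * (2 * c * z ^ 2 - (3 + c ^ 2) * z + 2 * c) / (z * (z ^ 2 - 2 * c * z + 1) ^ 2) := by
    intro z hz
    have h0 : (0 : ℂ) ∉ ball (0 : ℂ) 1 \ {0} := fun h => h.2 rfl
    obtain ⟨U, hUS, hU, hzU, L, hL⟩ :=
      exists_hasDerivAt_log_branch (isOpen_ball.sdiff isClosed_singleton) h0 hz I_ne_zero
    rw [hqS U hU hUS L (fun y hy => (hL y hy).1.differentiableAt.differentiableWithinAt)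
      (fun y hy => (hL y hy).2) z hzU]
    exact schwarzian_joukowsky_sub_log hU (fun h => h0 (hUS h)) (fun y hy => (hL y hy).1) hzU
  have hcont : ContinuousAt
      (fun z => -2 * (2 * c * z ^ 2 - (3 + c ^ 2) * z + 2 * c) / (z ^ 2 - 2 * c * z + 1) ^ 2) 0 :=
    ContinuousAt.div (by fun_prop) (by fun_prop) (by simp)
  have hpunct : ball (0 : ℂ) 1 \ {0} ∈ 𝓝[≠] 0 :=
    sdiff_mem_nhdsWithin_compl (ball_mem_nhds 0 one_pos) _
  convert (hcont.tendsto.mono_left nhdsWithin_le_nhds).congr' _ using 2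
  · ring
  · filter_upwards [hpunct] with z hz
    rw [hq z hz, mul_div_assoc', mul_div_mul_left _ _ hz.2]

section Moebius

variable {a : ℂ}

theorem hasDerivAt_moebius {w : ℂ} (hw : w * a - 1 ≠ 0) :
    HasDerivAt (fun w => (w - a) / (w * a - 1)) ((a ^ 2 - 1) / (w * a - 1) ^ 2) w := by
  refine (((hasDerivAt_id w).sub_const a).fun_div (((hasDerivAt_id w).mul_const a).sub_const 1)
    hw).congr_deriv ?_
  simp only [id]
  ring

theorem eventually_mul_sub_one_ne_zero (ha : a ^ 2 ≠ 1) : ∀ᶠ w in 𝓝 a, w * a - 1 ≠ 0 :=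
  (by fun_prop : ContinuousAt (· * a - 1) a).eventually_ne (by rwa [← sq, sub_ne_zero])

theorem tendsto_moebius_nhdsNE (ha : a ^ 2 ≠ 1) :
    Tendsto (fun w => (w - a) / (w * a - 1)) (𝓝[≠] a) (𝓝[≠] 0) := by
  have hden := eventually_mul_sub_one_ne_zero ha
  refine tendsto_nhdsWithin_of_tendsto_nhds_of_eventually_within _ ?_ ?_
  · have hφ : ContinuousAt (fun w => (w - a) / (w * a - 1)) a :=
      ContinuousAt.div (by fun_prop) (by fun_prop) hden.self_of_nhds
    simpa using hφ.tendsto.mono_left nhdsWithin_le_nhds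
  · filter_upwards [self_mem_nhdsWithin, nhdsWithin_le_nhds hden] with w hw hw'
    exact div_ne_zero (sub_ne_zero.2 hw) hw'

theorem tendsto_sub_mul_comp_moebius_mul_deriv_sq {q : ℂ → ℂ} {R : ℂ} (ha : a ^ 2 ≠ 1)
    (hq : Tendsto (fun z => z * q z) (𝓝[≠] 0) (𝓝 R)) :
    Tendsto (fun w => (w - a) * q ((w - a) / (w * a - 1)) *
        deriv (fun w => (w - a) / (w * a - 1)) w ^ 2) (𝓝[≠] a) (𝓝 (R / (a ^ 2 - 1))) := by
  have hden := eventually_mul_sub_one_ne_zero ha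
  have hfactor : Tendsto (fun w => (a ^ 2 - 1) ^ 2 / (w * a - 1) ^ 3) (𝓝[≠] a)
      (𝓝 (1 / (a ^ 2 - 1))) := by
    have : ContinuousAt (fun w => (a ^ 2 - 1) ^ 2 / (w * a - 1) ^ 3) a :=
      continuousAt_const.div (by fun_prop) (pow_ne_zero 3 hden.self_of_nhds)
    convert this.tendsto.mono_left nhdsWithin_le_nhds using 2
    field_simp
  have hlim := (hq.comp (tendsto_moebius_nhdsNE ha)).mul hfactor
  rw [mul_one_div] at hlim
  refine hlim.congr' ?_
  filter_upwards [nhdsWithin_le_nhds hden] with w hw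
  rw [(hasDerivAt_moebius hw).deriv, Function.comp_apply]
  field_simp

end Moebius

theorem wirtinger_neg_eight_mul_log_im_div_norm {z : ℂ} (hz : z.im ≠ 0) :
    wirtinger (fun z => -8 * Real.log (z.im / ‖z‖)) z = 4 / z + 4 * I / z.im := by
  have hz0 : z ≠ 0 := fun h => hz (by simp [h])
  have hlogIm : HasFDerivAt (fun z : ℂ => Real.log z.im) (z.im⁻¹ • imCLM) z :=
    (Real.hasDerivAt_log hz).comp_hasFDerivAt z imCLM.hasFDerivAt
  have hlogNorm := reCLM.hasFDerivAt.comp z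
    ((hasDerivAt_log (mem_slitPlane_iff.2 (Or.inr hz))).hasFDerivAt.restrictScalars ℝ)
  have hsplit : (fun z : ℂ => -8 * Real.log (z.im / ‖z‖)) =ᶠ[𝓝 z]
      fun z => -8 * Real.log z.im + 8 * (reCLM ∘ log) z := by
    filter_upwards [(continuous_im.isOpen_preimage _ isOpen_ne).mem_nhds hz] with w hw
    have hw0 : w ≠ 0 := fun h => hw (by simp [h])
    rw [Real.log_div hw (norm_ne_zero_iff.2 hw0), Function.comp_apply, reCLM_apply, log_re]
    ring
  have hnormSq : (normSq z : ℂ) = z.re ^ 2 + z.im ^ 2 := by push_cast [normSq_apply]; ring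
  have hnormSq0 : (z.re : ℂ) ^ 2 + (z.im : ℂ) ^ 2 ≠ 0 := by
    rw [← hnormSq]; exact_mod_cast (normSq_pos.2 hz0).ne'
  have him : (z.im : ℂ) ≠ 0 := by exact_mod_cast hz
  have hz' : (z.re : ℂ) + z.im * I ≠ 0 := by rwa [re_add_im]
  rw [wirtinger, (((hlogIm.const_mul (-8)).add (hlogNorm.const_mul 8)).congr_of_eventuallyEq
    hsplit).fderiv]
  simp only [add_apply, smul_apply, imCLM_apply, one_im, smul_eq_mul, mul_zero, I_im,
    ContinuousLinearMap.comp_apply, ContinuousLinearMap.coe_restrictScalars',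
    ContinuousLinearMap.toSpanSingleton_apply, one_mul, reCLM_apply, inv_re, inv_im, mul_re, I_re]
  push_cast
  rw [hnormSq, show (4 : ℂ) / z = 4 / (z.re + z.im * I) by rw [re_add_im]]
  field_simp
  linear_combination -8 * (z.im : ℂ) ^ 3 * I_sq

theorem exp_ofReal_mul_I_sq_sub_one (θ : ℝ) :
    exp (θ * I) ^ 2 - 1 = 2 * I * Real.sin θ * exp (θ * I) := by
  rw [exp_mul_I, ← ofReal_cos, ← ofReal_sin]
  have h : (Real.cos θ : ℂ) ^ 2 + (Real.sin θ : ℂ) ^ 2 = 1 := by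
    exact_mod_cast Real.cos_sq_add_sin_sq θ
  linear_combination h - (Real.sin θ : ℂ) ^ 2 * I_sq

theorem schwarzian_residue_equals_half_energy_derivative
    (θ : ℝ) (hθ0 : 0 < θ) (hθ : θ < Real.pi / 2)
    (q : ℂ → ℂ)
    (hqS : ∀ U : Set ℂ, IsOpen U → U ⊆ Metric.ball (0 : ℂ) 1 \ {0} →
      ∀ L : ℂ → ℂ, DifferentiableOn ℂ L U →
        (∀ z ∈ U, Complex.exp (L z) = Complex.I * z) →
        ∀ z ∈ U,
          q z = schwarzian (fun w => (1 / 2 : ℂ) * (Complex.I * w + 1 / (Complex.I * w)) -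
            Complex.I * (Real.cos θ : ℂ) * L w) z)
    (φ : ℂ → ℂ)
    (hφ : ∀ w, φ w = (w - Complex.exp ((θ : ℂ) * Complex.I)) /
      (w * Complex.exp ((θ : ℂ) * Complex.I) - 1)) :
    Tendsto
      (fun w => (w - Complex.exp ((θ : ℂ) * Complex.I)) * q (φ w) * (deriv φ w) ^ 2)
      (nhdsWithin (Complex.exp ((θ : ℂ) * Complex.I))
        {Complex.exp ((θ : ℂ) * Complex.I)}ᶜ)
      (nhds (2 * Complex.I * ((Real.cos θ / Real.sin θ : ℝ) : ℂ) *
        Complex.exp (-(θ : ℂ) * Complex.I))) ∧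
    2 * Complex.I * ((Real.cos θ / Real.sin θ : ℝ) : ℂ) *
        Complex.exp (-(θ : ℂ) * Complex.I)
      = (1 / 2 : ℂ) *
        wirtinger (fun z => -8 * Real.log (z.im / ‖z‖))
          (Complex.exp ((θ : ℂ) * Complex.I)) := by
  obtain rfl : φ = fun w => (w - exp (θ * I)) / (w * exp (θ * I) - 1) := funext hφ
  have hsin : (Real.sin θ : ℂ) ≠ 0 :=
    ofReal_ne_zero.2 (Real.sin_pos_of_pos_of_lt_pi hθ0 (by linarith [Real.pi_pos])).ne'
  have hsq := exp_ofReal_mul_I_sq_sub_one θ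
  have hsq_ne : exp (θ * I) ^ 2 ≠ 1 := by
    rw [← sub_ne_zero, hsq]
    exact mul_ne_zero (mul_ne_zero (mul_ne_zero two_ne_zero I_ne_zero) hsin) (exp_ne_zero _)
  rw [neg_mul, exp_neg, ofReal_div]
  refine ⟨?_, ?_⟩
  · convert tendsto_sub_mul_comp_moebius_mul_deriv_sq hsq_ne
      (tendsto_mul_nhdsNE_zero_of_eq_schwarzian hqS) using 2
    rw [hsq]
    field_simp
    linear_combination 4 * (Real.cos θ : ℂ) * I_sq
  · rw [wirtinger_neg_eight_mul_log_im_div_norm (by rw [exp_ofReal_mul_I_im]; exact_mod_cast hsin),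
      exp_ofReal_mul_I_im]
    have hexp : exp (θ * I) = Real.cos θ + Real.sin θ * I := by
      rw [exp_mul_I, ofReal_cos, ofReal_sin]
    have hexp0 := exp_ne_zero (θ * I)
    generalize exp (θ * I) = a at hexp hexp0 ⊢
    field_simp
    linear_combination -4 * I * hexp - 4 * (Real.sin θ : ℂ) * I_sq
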